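/- Let m ∈ ℕ, s ∈ {0,1,2}^{k_m−1} and n > m. Then r(G^1(s^0, n)) < l(G^0_s) < r(G^0_s) < l(G^0(s, n)). -/
import Mathlib


open Pointwise MeasureTheory

namespace CCS

/-- `dSeq a n` is the common length `d_n = ∏_{i=1}^n (1 - a_i)/2` of the intervals of the
`n`-th step of the construction of the central Cantor set `C(a)` (`d_0 = 1`).
The sequence `a` is indexed from `1`; the value `a 0` is irrelevant. -/
noncomputable def dSeq (a : ℕ → ℝ) (n : ℕ) : ℝ :=
  ∏ i ∈ Finset.Icc 1 n, ((1 - a i) / 2)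

/-- Left endpoint of the interval `I_t`, `t ∈ {0,1}^n` (coded as a list, the paper's
`t_j` being `t.getD (j-1) 0`): `l(I_t) = ∑_{j=1}^n t_j (d_{j-1} - d_j)`. -/
noncomputable def Il (a : ℕ → ℝ) (t : List ℕ) : ℝ :=
  ∑ j ∈ Finset.range t.length, (t.getD j 0 : ℝ) * (dSeq a j - dSeq a (j + 1))

/-- The `n`-th step `C_n(a)` of the construction of the central Cantor set:
the union of the intervals `I_t = [l(I_t), l(I_t) + d_n]` over `t ∈ {0,1}^n`. -/
noncomputable def cantorStep (a : ℕ → ℝ) (n : ℕ) : Set ℝ :=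
  ⋃ t ∈ {t : List ℕ | t.length = n ∧ ∀ j ∈ t, j ≤ 1},
    Set.Icc (Il a t) (Il a t + dSeq a n)

/-- The central Cantor set `C(a) = ⋂ₙ C_n(a)`. -/
noncomputable def cantorSet (a : ℕ → ℝ) : Set ℝ := ⋂ n, cantorStep a n

/-- Left endpoint of the interval `J_s = I_t - I_p`, for `s ∈ {0,1,2}^n`:
`l(J_s) = -1 + ∑_{j=1}^n s_j (d_{j-1} - d_j)`. -/
noncomputable def Jl (a : ℕ → ℝ) (s : List ℕ) : ℝ :=
  -1 + ∑ j ∈ Finset.range s.length, (s.getD j 0 : ℝ) * (dSeq a j - dSeq a (j + 1))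

/-- Right endpoint of `J_s`: `r(J_s) = l(J_s) + 2 d_n`. -/
noncomputable def Jr (a : ℕ → ℝ) (s : List ℕ) : ℝ :=
  Jl a s + 2 * dSeq a s.length

/-- The interval `J_s`. -/
noncomputable def Jset (a : ℕ → ℝ) (s : List ℕ) : Set ℝ := Set.Icc (Jl a s) (Jr a s)

/-- Left endpoint of the gap `G^i_s` (`i = 0`: left gap, `i = 1`: right gap) of `J_s`. -/
noncomputable def Gl (a : ℕ → ℝ) (i : ℕ) (s : List ℕ) : ℝ :=
  Jl a s + (i : ℝ) * (dSeq a s.length - dSeq a (s.length + 1)) + 2 * dSeq a (s.length + 1)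

/-- Right endpoint of the gap `G^i_s`. -/
noncomputable def Gr (a : ℕ → ℝ) (i : ℕ) (s : List ℕ) : ℝ :=
  Jl a s + ((i : ℝ) + 1) * (dSeq a s.length - dSeq a (s.length + 1))

/-- The gap `G^i_s ⊆ J_s`, an open interval. -/
noncomputable def Gset (a : ℕ → ℝ) (i : ℕ) (s : List ℕ) : Set ℝ :=
  Set.Ioo (Gl a i s) (Gr a i s)

/-- `N(0,s) = max {j : s_j > 0}`, `N(1,s) = max {j : s_j < 2}` (1-based, `max ∅ = 0`). -/
noncomputable def Nidx (i : ℕ) (s : List ℕ) : ℕ :=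
  sSup {j | 1 ≤ j ∧ j ≤ s.length ∧
    (if i = 0 then 0 < s.getD (j - 1) 0 else s.getD (j - 1) 0 < 2)}

/-- The family `𝒢^{i0}_{s0}(n)` of (indices of) gaps of rank `n`, for
`s0 ∈ {0,1,2}^{k_m - 1}`; a gap `G^i_s` is coded by the pair `(i, s)`.
`𝒢^{i0}_{s0}(m) = {G^{i0}_{s0}}` and for `n > m`,
`𝒢^{i0}_{s0}(n)` consists of the gap `Ḡ^{i0}_{s0}(n)` together with the gaps
`Ḡ^1_{t^j}(n)`, `Ḡ^0_{t^(j+1)}(n)` for all `G^j_t ∈ 𝒢^{i0}_{s0}(l)`, `m ≤ l < n`. -/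
def gapFamily (k : ℕ → ℕ) (i0 : ℕ) (s0 : List ℕ) (m : ℕ) (n : ℕ) : Set (ℕ × List ℕ) :=
  if n ≤ m then {(i0, s0)}
  else
    {(i0, s0 ++ List.replicate (k n - k m) (2 * i0))} ∪
      ⋃ (l : ℕ) (_ : m ≤ l) (hl : l < n),
        ⋃ p ∈ gapFamily k i0 s0 m l,
          ({(1, p.2 ++ p.1 :: List.replicate (k n - k l - 1) 2),
            (0, p.2 ++ (p.1 + 1) :: List.replicate (k n - k l - 1) 0)} : Set (ℕ × List ℕ))
termination_by n
decreasing_by exact hl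

/-- The family `𝒢^{i0}_{s0} = ⋃_{n ≥ m} 𝒢^{i0}_{s0}(n)`. -/
def gapFamilyAll (k : ℕ → ℕ) (i0 : ℕ) (s0 : List ℕ) (m : ℕ) : Set (ℕ × List ℕ) :=
  ⋃ (n : ℕ) (_ : m ≤ n), gapFamily k i0 s0 m n

/-- The family `𝒢_t := 𝒢^0_{t ++ 0^{(k_m - |t| - 1)}} ∪ 𝒢^1_{t ++ 2^{(k_m - |t| - 1)}}`
for `t ∈ {0,1,2}^k` with `k_{m-1} ≤ k < k_m`. -/
def gapFamilyT (k : ℕ → ℕ) (m : ℕ) (t : List ℕ) : Set (ℕ × List ℕ) :=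
  gapFamilyAll k 0 (t ++ List.replicate (k m - t.length - 1) 0) m ∪
    gapFamilyAll k 1 (t ++ List.replicate (k m - t.length - 1) 2) m

/-- The union `⋃ 𝒢` of a family of (indices of) gaps, as a subset of `ℝ`. -/
noncomputable def gapUnion (a : ℕ → ℝ) (G : Set (ℕ × List ℕ)) : Set ℝ :=
  ⋃ p ∈ G, Gset a p.1 p.2

/-- `padSeq k c s m n` is the index of the gap `G^i(s,n)` (for `c = 2i`):
`s ++ c^{(k_m - |s| - 1)} ++ 1 ++ c^{(k_{m+1} - k_m - 1)} ++ 1 ++ ⋯ ++ 1 ++ c^{(k_n - k_{n-1} - 1)}`. -/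
def padSeq (k : ℕ → ℕ) (c : ℕ) (s : List ℕ) (m : ℕ) : ℕ → List ℕ
  | 0 => s ++ List.replicate (k m - s.length - 1) c
  | n + 1 =>
    if n + 1 ≤ m then s ++ List.replicate (k m - s.length - 1) c
    else padSeq k c s m n ++ 1 :: List.replicate (k (n + 1) - k n - 1) c

/-- `δ_n := min {3d_i - d_{i-1} : k_{n-1} + 1 ≤ i ≤ k_n - 1}` (as an element of `EReal`,
so that `min ∅ = ⊤ = ∞`). -/
noncomputable def deltaMin (a : ℕ → ℝ) (k : ℕ → ℕ) (n : ℕ) : EReal :=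
  sInf ((fun i => ((3 * dSeq a i - dSeq a (i - 1) : ℝ) : EReal)) ''
    (Set.Icc (k (n - 1) + 1) (k n - 1)))

/-- `Δ_n := max {3d_i - d_{i-1} : k_{n-1} + 1 ≤ i ≤ k_n - 1}` (`max ∅ = ⊥ = -∞`). -/
noncomputable def deltaMax (a : ℕ → ℝ) (k : ℕ → ℕ) (n : ℕ) : EReal :=
  sSup ((fun i => ((3 * dSeq a i - dSeq a (i - 1) : ℝ) : EReal)) ''
    (Set.Icc (k (n - 1) + 1) (k n - 1)))

/-- `m_n := min { δ_n - (d_{k_n - 1} - d_{k_n}), 4 d_{k_n} - Δ_n }`. -/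
noncomputable def mSeq (a : ℕ → ℝ) (k : ℕ → ℕ) (n : ℕ) : EReal :=
  min (deltaMin a k n - ((dSeq a (k n - 1) - dSeq a (k n) : ℝ) : EReal))
    (((4 * dSeq a (k n) : ℝ) : EReal) - deltaMax a k n)

/-- `∑_{i=n+1}^∞ (d_{k_i - 1} - d_{k_i})`. -/
noncomputable def tailSum (a : ℕ → ℝ) (k : ℕ → ℕ) (n : ℕ) : ℝ :=
  ∑' i : ℕ, (dSeq a (k (n + 1 + i) - 1) - dSeq a (k (n + 1 + i)))

/-- Condition `(*)`: `m_n ≥ 2 ∑_{i=n+1}^∞ (d_{k_i - 1} - d_{k_i})` for every `n ∈ ℕ`. -/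
def condStar (a : ℕ → ℝ) (k : ℕ → ℕ) : Prop :=
  ∀ n : ℕ, 1 ≤ n → ((2 * tailSum a k n : ℝ) : EReal) ≤ mSeq a k n

/-- `(k_n)_{n ≥ 1}` is the increasing enumeration of all indices greater than `k 0 = k₀`
at which `a` exceeds `1/3`. -/
def IsGapEnum (a : ℕ → ℝ) (k : ℕ → ℕ) : Prop :=
  StrictMono k ∧ (∀ n, 1 ≤ n → k 0 < k n ∧ 1 / 3 < a (k n)) ∧
    (∀ j, k 0 < j → 1 / 3 < a j → ∃ n, 1 ≤ n ∧ k n = j)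

/-- `G` is a gap of `E`: a bounded connected component of `ℝ ∖ E`. -/
def IsGapOf (E G : Set ℝ) : Prop :=
  (∃ x ∉ E, G = connectedComponentIn Eᶜ x) ∧ Bornology.IsBounded G

/-- `C` is a proper (nontrivial) connected component of `E`. -/
def IsProperComponentOf (E C : Set ℝ) : Prop :=
  (∃ x ∈ E, C = connectedComponentIn E x) ∧ C.Nontrivial

/-- `E` is a Cantorval: a perfect set with infinitely many gaps such that both endpoints
of every gap are accumulated both by gaps and by proper components of `E`. -/
def IsCantorval (E : Set ℝ) : Prop :=
  Perfect E ∧ {G : Set ℝ | IsGapOf E G}.Infinite ∧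
    ∀ G, IsGapOf E G → ∀ p, p = sInf G ∨ p = sSup G →
      (∀ ε > 0, ∃ G', IsGapOf E G' ∧ G' ≠ G ∧ G' ⊆ Set.Ioo (p - ε) (p + ε)) ∧
      (∀ ε > 0, ∃ C, IsProperComponentOf E C ∧ C ⊆ Set.Ioo (p - ε) (p + ε))

/-- `J_s` and `J_u` (of length `k_m - 1`) are associated:
`N := N(0,s) = N(1,u) ∈ {k_{m-1}+1, …, k_m - 1}`, `s|(N-1) = u|(N-1)`, `u_N = s_N - 1`.
Then `J_u` is the interval covering `𝒢^0_s` and `J_s` is the interval covering `𝒢^1_u`. -/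
def Associated (k : ℕ → ℕ) (m : ℕ) (s u : List ℕ) : Prop :=
  s.length = k m - 1 ∧ u.length = k m - 1 ∧
    Nidx 0 s = Nidx 1 u ∧
    k (m - 1) + 1 ≤ Nidx 0 s ∧ Nidx 0 s ≤ k m - 1 ∧
    s.take (Nidx 0 s - 1) = u.take (Nidx 0 s - 1) ∧
    u.getD (Nidx 0 s - 1) 0 = s.getD (Nidx 0 s - 1) 0 - 1

/-- `G^i_g ⊂_* J_v`: the gap `G^i_g` is covered by the interval `J_v`, i.e. `G^i_g`
belongs to a family `𝒢^0_w` (resp. `𝒢^1_w`) such that `J_v` is the interval covering it. -/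
def CoversGap (k : ℕ → ℕ) (i : ℕ) (g : List ℕ) (v : List ℕ) : Prop :=
  ∃ m w, 1 ≤ m ∧
    ((Associated k m w v ∧ (i, g) ∈ gapFamilyAll k 0 w m) ∨
      (Associated k m v w ∧ (i, g) ∈ gapFamilyAll k 1 w m))

/-- The achievement set `E(x) = {∑_{j ∈ A} x_j : A ⊆ ℕ}` of a series (indexed from `1`). -/
def achievementSet (x : ℕ → ℝ) : Set ℝ :=
  {y | ∃ A : Set ℕ, A ⊆ {n | 1 ≤ n} ∧ HasSum (A.indicator x) y}

section aux
lemma getD_replicate' (r c j : ℕ) (h : j < r) : (List.replicate r c).getD j 0 = c := by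
  simp [List.getD, List.getElem?_replicate, h]

lemma dSeq_succ (a : ℕ → ℝ) (n : ℕ) : dSeq a (n+1) = dSeq a n * ((1 - a (n+1))/2) := by
  unfold dSeq; exact Finset.prod_Icc_succ_top (by omega) _

lemma dSeq_pos (a : ℕ → ℝ) (ha : ∀ n, 1 ≤ n → 0 < a n ∧ a n < 1) (n : ℕ) : 0 < dSeq a n := by
  refine Finset.prod_pos fun i hi => ?_
  have := (ha i (Finset.mem_Icc.mp hi).1).2; linarith

lemma dSeq_anti (a : ℕ → ℝ) (ha : ∀ n, 1 ≤ n → 0 < a n ∧ a n < 1) : StrictAnti (dSeq a) := by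
  refine strictAnti_nat_of_succ_lt fun n => ?_
  have h1 := ha (n+1) (by omega)
  have h2 := dSeq_pos a ha n
  rw [dSeq_succ]; nlinarith

lemma Jl_append (a : ℕ → ℝ) (t u : List ℕ) :
    Jl a (t ++ u) = Jl a t + ∑ j ∈ Finset.range u.length,
      (u.getD j 0 : ℝ) * (dSeq a (t.length + j) - dSeq a (t.length + j + 1)) := by
  unfold Jl
  rw [List.length_append, Finset.sum_range_add]
  have h1 : ∀ j ∈ Finset.range t.length,
      ((t ++ u).getD j 0 : ℝ) * (dSeq a j - dSeq a (j + 1))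
        = (t.getD j 0 : ℝ) * (dSeq a j - dSeq a (j + 1)) := fun j hj => by
    rw [List.getD_append _ _ _ _ (Finset.mem_range.mp hj)]
  have h2 : ∀ j ∈ Finset.range u.length,
      ((t ++ u).getD (t.length + j) 0 : ℝ) * (dSeq a (t.length + j) - dSeq a (t.length + j + 1))
        = (u.getD j 0 : ℝ) * (dSeq a (t.length + j) - dSeq a (t.length + j + 1)) := fun j hj => by
    rw [List.getD_append_right _ _ _ _ (by omega), Nat.add_sub_cancel_left]
  rw [Finset.sum_congr rfl h1, Finset.sum_congr rfl h2]; ring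

lemma Jl_append_replicate (a : ℕ → ℝ) (t : List ℕ) (r c : ℕ) :
    Jl a (t ++ List.replicate r c)
      = Jl a t + c * (dSeq a t.length - dSeq a (t.length + r)) := by
  rw [Jl_append]
  congr 1
  rw [List.length_replicate]
  calc ∑ j ∈ Finset.range r, ((List.replicate r c).getD j 0 : ℝ) *
        (dSeq a (t.length + j) - dSeq a (t.length + j + 1))
      = ∑ j ∈ Finset.range r, (c : ℝ) *
        ((fun i => dSeq a (t.length + i)) j - (fun i => dSeq a (t.length + i)) (j+1)) := by
        refine Finset.sum_congr rfl fun j hj => ?_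
        rw [getD_replicate' _ _ _ (Finset.mem_range.mp hj)]
        simp only [Nat.add_assoc]
    _ = (c:ℝ) * (dSeq a (t.length + 0) - dSeq a (t.length + r)) := by
        rw [← Finset.mul_sum, Finset.sum_range_sub']
    _ = (c:ℝ) * (dSeq a t.length - dSeq a (t.length + r)) := by norm_num

lemma Jl_concat (a : ℕ → ℝ) (t : List ℕ) (c : ℕ) :
    Jl a (t ++ [c]) = Jl a t + c * (dSeq a t.length - dSeq a (t.length + 1)) := by
  have := Jl_append_replicate a t 1 c
  simpa using this

lemma Jl_cons_rep (a : ℕ → ℝ) (t : List ℕ) (r c : ℕ) :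
    Jl a (t ++ 1 :: List.replicate r c)
      = Jl a t + (dSeq a t.length - dSeq a (t.length + 1))
        + c * (dSeq a (t.length + 1) - dSeq a (t.length + 1 + r)) := by
  have h : t ++ 1 :: List.replicate r c = (t ++ [1]) ++ List.replicate r c := by simp
  rw [h, Jl_append_replicate, Jl_concat]
  simp [List.length_append]

lemma padSeq_base (k : ℕ → ℕ) (c : ℕ) (s : List ℕ) (m n : ℕ) (h : n ≤ m) :
    padSeq k c s m n = s ++ List.replicate (k m - s.length - 1) c := by
  cases n with
  | zero => rfl
  | succ n => simp [padSeq, h]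

lemma padSeq_succ' (k : ℕ → ℕ) (c : ℕ) (s : List ℕ) (m n : ℕ) (h : m < n + 1) :
    padSeq k c s m (n+1)
      = padSeq k c s m n ++ 1 :: List.replicate (k (n + 1) - k n - 1) c := by
  simp [padSeq, Nat.not_le.mpr h]

lemma padSeq0_spec (a : ℕ → ℝ) (k : ℕ → ℕ) (hmono : StrictMono k)
    (hk1 : ∀ l, 1 ≤ l → 1 ≤ k l) (m : ℕ) (hm : 1 ≤ m)
    (s : List ℕ) (hslen : s.length = k m - 1) :
    ∀ n, m ≤ n → (padSeq k 0 s m n).length = k n - 1 ∧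
      Jl a (padSeq k 0 s m n)
        = Jl a s + ∑ l ∈ Finset.Ico m n, (dSeq a (k l - 1) - dSeq a (k l)) := by
  intro n hn
  induction n, hn using Nat.le_induction with
  | base =>
    have h1 : 1 ≤ k m := hk1 m hm
    rw [padSeq_base k 0 s m m le_rfl]
    have h2 : k m - s.length - 1 = 0 := by omega
    rw [h2]
    simp [hslen]
  | succ n hn ih =>
    have h1 : 1 ≤ k n := hk1 n (by omega)
    have h2 : k n < k (n+1) := hmono (by omega)
    rw [padSeq_succ' k 0 s m n (by omega)]
    constructor
    · simp only [List.length_append, List.length_cons, List.length_replicate, ih.1]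
      omega
    · rw [Jl_cons_rep, ih.1, ih.2]
      have e1 : k n - 1 + 1 = k n := by omega
      have e2 : k n + (k (n+1) - k n - 1) = k (n+1) - 1 := by omega
      rw [e1, e2, Finset.sum_Ico_succ_top hn]
      push_cast
      ring

lemma padSeq2_spec (a : ℕ → ℝ) (k : ℕ → ℕ) (hmono : StrictMono k)
    (hk1 : ∀ l, 1 ≤ l → 1 ≤ k l) (m : ℕ) (hm : 1 ≤ m)
    (t : List ℕ) (htlen : t.length = k m) :
    ∀ n, m + 1 ≤ n → (padSeq k 2 t (m+1) n).length = k n - 1 ∧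
      Jl a (padSeq k 2 t (m+1) n)
        = Jl a t + 2 * dSeq a (k m) - 2 * dSeq a (k n - 1)
          + ∑ l ∈ Finset.Ico (m+1) n, (dSeq a (k l) - dSeq a (k l - 1)) := by
  intro n hn
  induction n, hn using Nat.le_induction with
  | base =>
    have h1 : 1 ≤ k m := hk1 m hm
    have h2 : k m < k (m+1) := hmono (by omega)
    rw [padSeq_base k 2 t (m+1) (m+1) le_rfl]
    constructor
    · simp only [List.length_append, List.length_replicate, htlen]; omega
    · rw [Jl_append_replicate, htlen]
      have e1 : k m + (k (m+1) - k m - 1) = k (m+1) - 1 := by omega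
      rw [e1]
      simp
      ring
  | succ n hn ih =>
    have h1 : 1 ≤ k n := hk1 n (by omega)
    have h2 : k n < k (n+1) := hmono (by omega)
    rw [padSeq_succ' k 2 t (m+1) n (by omega)]
    constructor
    · simp only [List.length_append, List.length_cons, List.length_replicate, ih.1]
      omega
    · rw [Jl_cons_rep, ih.1, ih.2]
      have e1 : k n - 1 + 1 = k n := by omega
      have e2 : k n + (k (n+1) - k n - 1) = k (n+1) - 1 := by omega
      rw [e1, e2, Finset.sum_Ico_succ_top hn]
      push_cast
      ring
end aux

/-- Lemma: for `s ∈ {0,1,2}^{k_m - 1}` and `n > m`,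
`r(G¹(s⌢0, n)) < l(G⁰_s) < r(G⁰_s) < l(G⁰(s, n))`. -/
theorem gap_chain_left (a : ℕ → ℝ) (k : ℕ → ℕ)
    (ha : ∀ n, 1 ≤ n → 0 < a n ∧ a n < 1)
    (hinf : {n : ℕ | 1 ≤ n ∧ 1 / 3 < a n}.Infinite)
    (hk0 : a (k 0 + 1) < 1 / 3)
    (hk : IsGapEnum a k)
    (m : ℕ) (hm : 1 ≤ m)
    (s : List ℕ) (hs2 : ∀ x ∈ s, x ≤ 2) (hslen : s.length = k m - 1)
    (n : ℕ) (hn : m < n) :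
    Gr a 1 (padSeq k 2 (s ++ [0]) (m + 1) n) < Gl a 0 s ∧
      Gl a 0 s < Gr a 0 s ∧
      Gr a 0 s < Gl a 0 (padSeq k 0 s m n) := by
  obtain ⟨hmono, hk2, -⟩ := hk
  have hk1 : ∀ l, 1 ≤ l → 1 ≤ k l := fun l hl => by have := (hk2 l hl).1; omega
  have hkm1 : 1 ≤ k m := hk1 m hm
  have hkn1 : 1 ≤ k n := hk1 n (by omega)
  have hdpos := dSeq_pos a ha
  have hanti := dSeq_anti a ha
  have htlen : (s ++ [0]).length = k m := by
    simp only [List.length_append, List.length_cons, List.length_nil, hslen]; omega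
  have h2 := padSeq2_spec a k hmono hk1 m hm (s ++ [0]) htlen n hn
  have h0 := padSeq0_spec a k hmono hk1 m hm s hslen n (le_of_lt hn)
  have hJt : Jl a (s ++ [0]) = Jl a s := by
    have := Jl_concat a s 0; simpa using this
  have e1 : k m - 1 + 1 = k m := by omega
  have e2 : k n - 1 + 1 = k n := by omega
  refine ⟨?_, ?_, ?_⟩
  · -- part 1
    simp only [Gr, Gl, Jl]
    rw [← Jl, ← Jl, h2.1, e2, h2.2, hJt, hslen, e1]
    have hS2 : ∑ l ∈ Finset.Ico (m+1) n, (dSeq a (k l) - dSeq a (k l - 1)) ≤ 0 := by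
      refine Finset.sum_nonpos fun l hl => ?_
      have : dSeq a (k l) ≤ dSeq a (k l - 1) := hanti.antitone (Nat.sub_le _ _)
      linarith
    have hd := hdpos (k n)
    push_cast
    linarith
  · -- part 2
    simp only [Gr, Gl, Jl]
    rw [← Jl, hslen, e1]
    have ha3 : 1/3 < a (k m) := (hk2 m hm).2
    have hds : dSeq a (k m) = dSeq a (k m - 1) * ((1 - a (k m))/2) := by
      conv_lhs => rw [← e1, dSeq_succ, e1]
    have hd := hdpos (k m - 1)
    push_cast
    nlinarith
  · -- part 3
    simp only [Gr, Gl, Jl]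
    rw [← Jl, ← Jl, h0.1, e2, h0.2, hslen, e1]
    have hterm : dSeq a (k m - 1) - dSeq a (k m)
        ≤ ∑ l ∈ Finset.Ico m n, (dSeq a (k l - 1) - dSeq a (k l)) := by
      refine Finset.single_le_sum (f := fun l => dSeq a (k l - 1) - dSeq a (k l))
        (fun l hl => ?_) (Finset.mem_Ico.mpr ⟨le_rfl, hn⟩)
      have : dSeq a (k l) ≤ dSeq a (k l - 1) := hanti.antitone (Nat.sub_le _ _)
      show (0:ℝ) ≤ dSeq a (k l - 1) - dSeq a (k l)
      linarith
    have hd := hdpos (k n)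
    push_cast
    linarith
end CCS
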